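/- arXiv:math/0505479 — 2 statements merged into one kernel-verified Lean document; each statement's English description precedes it below -/
import Mathlib

section
/- For any τ ∈ ℤ, n ∈ ℤ, and dyadic numbers M₁, M₂ ≥ 1, the number of pairs (τ₁, n₁) ∈ ℤ² such that ⟨τ₁ − n₁²⟩ ≤ 2M₁ and ⟨(τ−τ₁) − (n−n₁)²⟩ ≤ 2M₂ is bounded by C · min(M₁,M₂) · (M₁+M₂)^{1/2} for an absolute constant C. -/
open Set

private lemma sqset_finite (A B : ℤ) : {m : ℤ | A ≤ m ^ 2 ∧ m ^ 2 ≤ B}.Finite := by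
  apply Set.Finite.subset (Set.finite_Icc (-(|B| + 1)) (|B| + 1))
  rintro m ⟨-, h2⟩
  have hB : B ≤ |B| := le_abs_self B
  have hB0 : 0 ≤ |B| := abs_nonneg B
  constructor <;> nlinarith [sq_nonneg (m + |B| + 1), sq_nonneg (m - (|B| + 1))]

private lemma count_sq (A B : ℤ) :
    {m : ℤ | A ≤ m ^ 2 ∧ m ^ 2 ≤ B}.ncard ≤ 2 * ((B - A).toNat.sqrt + 1) := by
  set r : ℕ := (B - A).toNat.sqrt with hr
  set S := {m : ℤ | A ≤ m ^ 2 ∧ m ^ 2 ≤ B} with hS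
  have key : ∀ T : Set ℤ, T ⊆ S → (∀ m ∈ T, 0 ≤ m) → T.ncard ≤ r + 1 := by
    intro T hTS hTpos
    by_cases hne : T.Nonempty
    · obtain ⟨m₀, hm₀, hleast⟩ :=
        Int.exists_least_of_bdd ⟨0, fun z hz => hTpos z hz⟩ hne
      have hsub : T ⊆ Set.Icc m₀ (m₀ + (r : ℤ)) := by
        intro m hm
        have h1 : m₀ ≤ m := hleast m hm
        have h0 : 0 ≤ m₀ := hTpos m₀ hm₀
        have hq : (m - m₀) ^ 2 ≤ B - A := by
          have hmB := (hTS hm).2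
          have hmA := (hTS hm₀).1
          nlinarith
        have hBA : (0 : ℤ) ≤ B - A := le_trans (sq_nonneg _) hq
        have h2 : (m - m₀).toNat ≤ r := by
          apply Nat.le_sqrt.mpr
          have : ((m - m₀).toNat * (m - m₀).toNat : ℤ) ≤ ((B - A).toNat : ℤ) := by
            rw [Int.toNat_of_nonneg (by omega : (0:ℤ) ≤ m - m₀),
              Int.toNat_of_nonneg hBA]
            nlinarith
          exact_mod_cast this
        refine ⟨h1, ?_⟩
        omega
      calc T.ncard ≤ (Set.Icc m₀ (m₀ + (r : ℤ))).ncard :=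
            Set.ncard_le_ncard hsub (Set.finite_Icc _ _)
        _ = r + 1 := by
            rw [← Finset.coe_Icc, Set.ncard_coe_finset, Int.card_Icc]
            omega
    · rw [Set.not_nonempty_iff_eq_empty.mp hne]
      simp
  have hup : S ∩ {m | 0 ≤ m} ∪ S ∩ {m | m < 0} = S := by
    ext m
    simp only [Set.mem_union, Set.mem_inter_iff, Set.mem_setOf_eq]
    constructor
    · rintro (⟨h, -⟩ | ⟨h, -⟩) <;> exact h
    · intro h
      rcases le_or_gt 0 m with hm | hm
      · exact Or.inl ⟨h, hm⟩
      · exact Or.inr ⟨h, hm⟩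
  have hneg : (S ∩ {m | m < 0}).ncard ≤ r + 1 := by
    have himg : (S ∩ {m | m < 0}).ncard = (Neg.neg '' (S ∩ {m | m < 0})).ncard :=
      (Set.ncard_image_of_injective _ neg_injective).symm
    rw [himg]
    apply key
    · rintro x ⟨m, ⟨hmS, -⟩, rfl⟩
      exact ⟨by simpa using hmS.1, by simpa using hmS.2⟩
    · rintro x ⟨m, ⟨-, hmneg⟩, rfl⟩
      simp only [Set.mem_setOf_eq] at hmneg ⊢
      omega
  calc S.ncard = (S ∩ {m | 0 ≤ m} ∪ S ∩ {m | m < 0}).ncard := by rw [hup]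
    _ ≤ (S ∩ {m | 0 ≤ m}).ncard + (S ∩ {m | m < 0}).ncard := Set.ncard_union_le _ _
    _ ≤ (r + 1) + (r + 1) := by
        exact Nat.add_le_add (key _ Set.inter_subset_left (fun m hm => hm.2)) hneg
    _ = 2 * (r + 1) := by ring

private lemma aux (τ n a b : ℤ) :
    {p : ℤ × ℤ | |p.1 - p.2 ^ 2| ≤ a ∧ |(τ - p.1) - (n - p.2) ^ 2| ≤ b}.ncard
      ≤ (2 * a + 1).toNat * (2 * ((4 * (a + b)).toNat.sqrt + 1)) ∧
    {p : ℤ × ℤ | |p.1 - p.2 ^ 2| ≤ a ∧ |(τ - p.1) - (n - p.2) ^ 2| ≤ b}.Finite := by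
  set S := {p : ℤ × ℤ | |p.1 - p.2 ^ 2| ≤ a ∧ |(τ - p.1) - (n - p.2) ^ 2| ≤ b} with hSdef
  set A : ℤ := 2 * τ - n ^ 2 - 2 * (a + b) with hA
  set B : ℤ := 2 * τ - n ^ 2 + 2 * (a + b) with hB
  set N : Set ℤ := {m : ℤ | A ≤ (2 * m - n) ^ 2 ∧ (2 * m - n) ^ 2 ≤ B} with hN
  set f : ℤ × ℤ → ℤ × ℤ := fun p => (p.1 - p.2 ^ 2, p.2) with hf
  have hfinj : Function.Injective f := by
    rintro ⟨x1, y1⟩ ⟨x2, y2⟩ h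
    simp only [hf, Prod.mk.injEq] at h
    obtain ⟨h1, h2⟩ := h
    subst h2
    simp_all
  have hg : Function.Injective (fun m : ℤ => 2 * m - n) := by
    intro x y h
    simp only at h
    omega
  have hNfin : N.Finite := by
    have : N = (fun m : ℤ => 2 * m - n) ⁻¹' {x : ℤ | A ≤ x ^ 2 ∧ x ^ 2 ≤ B} := by
      ext m; simp [hN]
    rw [this]
    exact (sqset_finite A B).preimage (hg.injOn)
  have hNcard : N.ncard ≤ 2 * ((4 * (a + b)).toNat.sqrt + 1) := by
    have h1 : N.ncard = ((fun m : ℤ => 2 * m - n) '' N).ncard :=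
      (Set.ncard_image_of_injective _ hg).symm
    have h2 : (fun m : ℤ => 2 * m - n) '' N ⊆ {x : ℤ | A ≤ x ^ 2 ∧ x ^ 2 ≤ B} := by
      rintro x ⟨m, hm, rfl⟩; exact hm
    have h3 := Set.ncard_le_ncard h2 (sqset_finite A B)
    have h4 := count_sq A B
    have hBA : B - A = 4 * (a + b) := by rw [hA, hB]; ring
    rw [hBA] at h4
    omega
  have himgsub : f '' S ⊆ (Set.Icc (-a) a) ×ˢ N := by
    rintro ⟨x, m⟩ ⟨⟨τ₁, n₁⟩, ⟨hp1, hp2⟩, heq⟩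
    simp only [hf, Prod.mk.injEq] at heq
    obtain ⟨hx, hm⟩ := heq
    subst hx; subst hm
    simp only [Set.mem_prod, Set.mem_Icc, hN, Set.mem_setOf_eq]
    rw [abs_le] at hp1 hp2
    refine ⟨⟨hp1.1, hp1.2⟩, ?_, ?_⟩ <;> nlinarith [hp1.1, hp1.2, hp2.1, hp2.2]
  have hprodfin : ((Set.Icc (-a) a) ×ˢ N).Finite := (Set.finite_Icc _ _).prod hNfin
  have hSfin : S.Finite :=
    Set.Finite.of_finite_image (hprodfin.subset himgsub) hfinj.injOn
  refine ⟨?_, hSfin⟩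
  have heqcard : S.ncard = (f '' S).ncard := (Set.ncard_image_of_injective _ hfinj).symm
  have hprodeq : (Set.Icc (-a) a) ×ˢ N = ↑(Finset.Icc (-a) a ×ˢ hNfin.toFinset) := by
    rw [Finset.coe_product, Finset.coe_Icc, Set.Finite.coe_toFinset]
  calc S.ncard = (f '' S).ncard := heqcard
    _ ≤ ((Set.Icc (-a) a) ×ˢ N).ncard := Set.ncard_le_ncard himgsub hprodfin
    _ = (Finset.Icc (-a) a ×ˢ hNfin.toFinset).card := by
        rw [hprodeq, Set.ncard_coe_finset]
    _ = (Finset.Icc (-a) a).card * hNfin.toFinset.card := Finset.card_product _ _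
    _ = (2 * a + 1).toNat * N.ncard := by
        rw [Int.card_Icc, Set.ncard_eq_toFinset_card N hNfin]
        congr 1
        omega
    _ ≤ (2 * a + 1).toNat * (2 * ((4 * (a + b)).toNat.sqrt + 1)) :=
        Nat.mul_le_mul_left _ hNcard

private lemma aux_swap (τ n a b : ℤ) :
    {p : ℤ × ℤ | |p.1 - p.2 ^ 2| ≤ a ∧ |(τ - p.1) - (n - p.2) ^ 2| ≤ b}.ncard
      ≤ (2 * b + 1).toNat * (2 * ((4 * (a + b)).toNat.sqrt + 1)) := by
  set g : ℤ × ℤ → ℤ × ℤ := fun p => (τ - p.1, n - p.2) with hgdef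
  have hginj : Function.Injective g := by
    rintro ⟨x1, y1⟩ ⟨x2, y2⟩ h
    simp only [hgdef, Prod.mk.injEq] at h
    obtain ⟨h1, h2⟩ := h
    simp only [Prod.mk.injEq]
    omega
  have himg : {p : ℤ × ℤ | |p.1 - p.2 ^ 2| ≤ a ∧ |(τ - p.1) - (n - p.2) ^ 2| ≤ b}
      = g '' {p : ℤ × ℤ | |p.1 - p.2 ^ 2| ≤ b ∧ |(τ - p.1) - (n - p.2) ^ 2| ≤ a} := by
    ext ⟨x, y⟩
    constructor
    · rintro ⟨h1, h2⟩
      refine ⟨(τ - x, n - y), ⟨?_, ?_⟩, by simp [hgdef]⟩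
      · simpa using h2
      · simpa using h1
    · rintro ⟨⟨u, v⟩, ⟨h1, h2⟩, heq⟩
      simp only [hgdef, Prod.mk.injEq] at heq
      obtain ⟨hx, hy⟩ := heq
      subst hx; subst hy
      constructor
      · simpa using h2
      · simpa using h1
  rw [himg, Set.ncard_image_of_injective _ hginj]
  have h := (aux τ n b a).1
  have hab : b + a = a + b := by ring
  rw [hab] at h
  exact h

private lemma numeric (kmin k₁ k₂ : ℕ) (c : ℤ) (hc : c = 2 ^ (kmin + 1)) (Ncard : ℕ)
    (hN : Ncard ≤ (2 * c + 1).toNat *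
      (2 * ((4 * ((2:ℤ) ^ (k₁ + 1) + 2 ^ (k₂ + 1))).toNat.sqrt + 1))) :
    (Ncard : ℝ) ≤ 100 * 2 ^ kmin * ((2:ℝ) ^ k₁ + 2 ^ k₂) ^ ((1 : ℝ) / 2) := by
  set L : ℝ := (2:ℝ) ^ k₁ + (2:ℝ) ^ k₂ with hL
  have h1k : (1:ℝ) ≤ 2 ^ k₁ := one_le_pow₀ (by norm_num)
  have h2k : (1:ℝ) ≤ 2 ^ k₂ := one_le_pow₀ (by norm_num)
  have hL2 : (2:ℝ) ≤ L := by rw [hL]; linarith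
  have hL0 : (0:ℝ) ≤ L := by linarith
  have hsqrt1 : (1:ℝ) ≤ Real.sqrt L := by
    rw [show (1:ℝ) = Real.sqrt 1 by simp]
    exact Real.sqrt_le_sqrt (by linarith)
  have hsqrt0 : (0:ℝ) ≤ Real.sqrt L := Real.sqrt_nonneg L
  set t : ℤ := 4 * ((2:ℤ) ^ (k₁ + 1) + 2 ^ (k₂ + 1)) with ht
  have ht0 : (0:ℤ) ≤ t := by positivity
  have htcast : ((t.toNat : ℕ) : ℝ) = 8 * L := by
    rw [show ((t.toNat : ℕ) : ℝ) = ((t.toNat : ℤ) : ℝ) by push_cast; ring,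
      Int.toNat_of_nonneg ht0, ht, hL]
    push_cast
    ring
  have hsqrtt : ((t.toNat.sqrt : ℕ) : ℝ) ≤ 3 * Real.sqrt L := by
    have h1 : ((t.toNat.sqrt : ℕ) : ℝ) ≤ Real.sqrt (t.toNat : ℝ) :=
      Real.nat_sqrt_le_real_sqrt
    rw [htcast] at h1
    have h2 : Real.sqrt (8 * L) ≤ 3 * Real.sqrt L := by
      rw [show (8:ℝ) * L = 8 * L from rfl, Real.sqrt_mul (by norm_num) L]
      have h8 : Real.sqrt 8 ≤ 3 := by
        rw [show (3:ℝ) = Real.sqrt 9 by rw [show (9:ℝ) = 3 ^ 2 by norm_num, Real.sqrt_sq (by norm_num)]]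
        exact Real.sqrt_le_sqrt (by norm_num)
      nlinarith
    linarith
  have hcsum : (((2 * c + 1).toNat : ℕ) : ℝ) ≤ 5 * 2 ^ kmin := by
    have hc0 : (0:ℤ) ≤ 2 * c + 1 := by rw [hc]; positivity
    rw [show (((2 * c + 1).toNat : ℕ) : ℝ) = (((2 * c + 1).toNat : ℤ) : ℝ) by push_cast; ring,
      Int.toNat_of_nonneg hc0, hc]
    push_cast
    have : (1:ℝ) ≤ 2 ^ kmin := one_le_pow₀ (by norm_num)
    rw [pow_succ]
    linarith
  have hmin0 : (0:ℝ) ≤ 2 ^ kmin := by positivity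
  calc (Ncard : ℝ)
      ≤ (((2 * c + 1).toNat : ℕ) : ℝ) * (2 * (((t.toNat.sqrt : ℕ) : ℝ) + 1)) := by
        exact_mod_cast hN
    _ ≤ (5 * 2 ^ kmin) * (2 * (3 * Real.sqrt L + Real.sqrt L)) := by
        apply mul_le_mul hcsum _ (by positivity) (by positivity)
        have : ((t.toNat.sqrt : ℕ) : ℝ) + 1 ≤ 3 * Real.sqrt L + Real.sqrt L := by linarith
        linarith
    _ = 40 * 2 ^ kmin * Real.sqrt L := by ring
    _ ≤ 100 * 2 ^ kmin * Real.sqrt L := by nlinarith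
    _ = 100 * 2 ^ kmin * L ^ ((1:ℝ) / 2) := by rw [Real.sqrt_eq_rpow]

/-- The counting lemma underlying Bourgain's `L⁴` Strichartz estimate on the torus:
for `τ, n ∈ ℤ` and dyadic `M₁, M₂ ≥ 1`, the number of pairs `(τ₁, n₁) ∈ ℤ²` with
`⟨τ₁ - n₁²⟩ ≤ 2M₁` and `⟨(τ-τ₁) - (n-n₁)²⟩ ≤ 2M₂` is at most
`C · min(M₁,M₂) · (M₁+M₂)^{1/2}` for an absolute constant `C`,
where `⟨x⟩ = (1+x²)^{1/2}`. -/
theorem stmt_5 :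
    ∃ C : ℝ, 0 < C ∧ ∀ (τ n : ℤ) (M₁ M₂ : ℝ) (k₁ k₂ : ℕ),
      M₁ = 2 ^ k₁ → M₂ = 2 ^ k₂ →
      (({p : ℤ × ℤ |
            Real.sqrt (1 + ((p.1 : ℝ) - (p.2 : ℝ) ^ 2) ^ 2) ≤ 2 * M₁ ∧
            Real.sqrt (1 + (((τ - p.1 : ℤ) : ℝ) - ((n - p.2 : ℤ) : ℝ) ^ 2) ^ 2) ≤ 2 * M₂}.ncard : ℝ))
        ≤ C * min M₁ M₂ * (M₁ + M₂) ^ ((1 : ℝ) / 2) := by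
  refine ⟨100, by norm_num, ?_⟩
  intro τ n M₁ M₂ k₁ k₂ hM₁ hM₂
  subst hM₁; subst hM₂
  set a : ℤ := 2 ^ (k₁ + 1) with ha
  set b : ℤ := 2 ^ (k₂ + 1) with hb
  have hsub : {p : ℤ × ℤ |
        Real.sqrt (1 + ((p.1 : ℝ) - (p.2 : ℝ) ^ 2) ^ 2) ≤ 2 * (2:ℝ) ^ k₁ ∧
        Real.sqrt (1 + (((τ - p.1 : ℤ) : ℝ) - ((n - p.2 : ℤ) : ℝ) ^ 2) ^ 2) ≤ 2 * (2:ℝ) ^ k₂}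
      ⊆ {p : ℤ × ℤ | |p.1 - p.2 ^ 2| ≤ a ∧ |(τ - p.1) - (n - p.2) ^ 2| ≤ b} := by
    rintro ⟨τ₁, n₁⟩ ⟨h1, h2⟩
    simp only [Set.mem_setOf_eq] at h1 h2 ⊢
    constructor
    · set x : ℝ := (τ₁ : ℝ) - (n₁ : ℝ) ^ 2 with hxdef
      have hx0 : (0:ℝ) ≤ 1 + x ^ 2 := by positivity
      have hsq : 1 + x ^ 2 ≤ (2 * (2:ℝ) ^ k₁) ^ 2 := by
        nlinarith [Real.sq_sqrt hx0, Real.sqrt_nonneg (1 + x ^ 2)]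
      have hacast : ((a : ℤ) : ℝ) = 2 * (2:ℝ) ^ k₁ := by
        rw [ha]; push_cast; ring
      have hZ : (τ₁ - n₁ ^ 2) ^ 2 < a ^ 2 := by
        have hr : x ^ 2 < ((a : ℤ) : ℝ) ^ 2 := by rw [hacast]; linarith
        have : ((τ₁ - n₁ ^ 2 : ℤ) : ℝ) ^ 2 < ((a : ℤ) : ℝ) ^ 2 := by
          push_cast
          convert hr using 2
        exact_mod_cast this
      have ha0 : (0:ℤ) < a := by rw [ha]; positivity
      rw [abs_le]
      constructor <;> nlinarith
    · set x : ℝ := ((τ - τ₁ : ℤ) : ℝ) - ((n - n₁ : ℤ) : ℝ) ^ 2 with hxdef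
      have hx0 : (0:ℝ) ≤ 1 + x ^ 2 := by positivity
      have hsq : 1 + x ^ 2 ≤ (2 * (2:ℝ) ^ k₂) ^ 2 := by
        nlinarith [Real.sq_sqrt hx0, Real.sqrt_nonneg (1 + x ^ 2)]
      have hbcast : ((b : ℤ) : ℝ) = 2 * (2:ℝ) ^ k₂ := by
        rw [hb]; push_cast; ring
      have hZ : ((τ - τ₁) - (n - n₁) ^ 2) ^ 2 < b ^ 2 := by
        have hr : x ^ 2 < ((b : ℤ) : ℝ) ^ 2 := by rw [hbcast]; linarith
        have : (((τ - τ₁) - (n - n₁) ^ 2 : ℤ) : ℝ) ^ 2 < ((b : ℤ) : ℝ) ^ 2 := by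
          push_cast
          convert hr using 2
          rw [hxdef]
          push_cast
          ring
        exact_mod_cast this
      have hb0 : (0:ℤ) < b := by rw [hb]; positivity
      rw [abs_le]
      constructor <;> nlinarith
  have hSfin := (aux τ n a b).2
  have hcard1 := Set.ncard_le_ncard hsub hSfin
  rcases le_total k₁ k₂ with hk | hk
  · have hmin : min ((2:ℝ) ^ k₁) ((2:ℝ) ^ k₂) = (2:ℝ) ^ k₁ :=
      min_eq_left (pow_le_pow_right₀ (by norm_num) hk)
    rw [hmin]
    have hb1 := (aux τ n a b).1
    have hfinal := numeric k₁ k₁ k₂ a ha _ (le_trans hcard1 hb1)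
    exact hfinal
  · have hmin : min ((2:ℝ) ^ k₁) ((2:ℝ) ^ k₂) = (2:ℝ) ^ k₂ :=
      min_eq_right (pow_le_pow_right₀ (by norm_num) hk)
    rw [hmin]
    have hb1 := aux_swap τ n a b
    have hfinal := numeric k₂ k₁ k₂ b hb _ (le_trans hcard1 hb1)
    exact hfinal
end

section
/- Let F : 𝕋 → ℝ be smooth, with zero mean, and suppose F satisfies F_t + H F_{xx} = F_x²/2 − P₀(F_x²)/2, where P₀ denotes the mean value. Then W := P₊(e^{-iF/2}) satisfies W_t − i W_{xx} = −P₊(W · P₋(F_{xx})) + (i/4) P₀(F_x²) W. -/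
open Real

/-- The Schrödinger-type equation satisfied by Tao's gauge transform `W = P₊(e^{-iF/2})`.
`Pp`, `Pm`, `P0` are the projections on positive, negative and zero Fourier modes and `H` is the
Hilbert transform (symbol `-i sgn ξ`), axiomatised through their algebraic properties:
`Pp` is linear and commutes with `∂ₓ`, `Pp + Pm + P0 = id`, `P0 g` is constant,
`Pp ∘ H = -i Pp`, `i H g - g = -2 Pm g - P0 g`, and `P₊` kills products of nonpositive-frequency
functions with negative-frequency functions.  If the real-valued zero-mean `F` satisfies
`F_t + H F_xx = F_x²/2 - P₀(F_x²)/2`, then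
`W_t - i W_xx = -P₊(W · P₋ F_xx) + (i/4) P₀(F_x²) W`. -/
theorem stmt_10
    (Pp Pm P0 H : (ℝ → ℂ) → (ℝ → ℂ))
    (hPpadd : ∀ g h : ℝ → ℂ, Pp (g + h) = Pp g + Pp h)
    (hPpsmul : ∀ (c : ℂ) (g : ℝ → ℂ), Pp (fun x => c * g x) = fun x => c * Pp g x)
    (hsplit : ∀ g : ℝ → ℂ, Pp g + Pm g + P0 g = g)
    (hP0const : ∀ g : ℝ → ℂ, ∃ c : ℂ, P0 g = fun _ => c)
    (hPpH : ∀ g : ℝ → ℂ, Pp (H g) = fun x => -Complex.I * Pp g x)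
    (hHid : ∀ g : ℝ → ℂ,
      (fun x => Complex.I * H g x - g x) = fun x => -2 * Pm g x - P0 g x)
    (hPpderiv : ∀ g : ℝ → ℂ, Pp (deriv g) = deriv (Pp g))
    (hvanish : ∀ g h : ℝ → ℂ, Pp (fun x => (Pm g x + P0 g x) * Pm h x) = 0)
    (F : ℝ → ℝ → ℝ)
    (hsmooth : ContDiff ℝ (⊤ : ℕ∞) (Function.uncurry F))
    (hper : ∀ t x, F t (x + 2 * π) = F t x)
    (hmean : ∀ t, (∫ x in (0 : ℝ)..(2 * π), F t x) = 0)
    (Fc : ℝ → ℝ → ℂ) (hFc : ∀ t x, Fc t x = (F t x : ℂ))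
    (hFxx0 : ∀ t, P0 (deriv (deriv (Fc t))) = 0)
    (heq : ∀ t x, deriv (fun s => Fc s x) t + H (deriv (deriv (Fc t))) x
        = (deriv (Fc t) x) ^ 2 / 2 - P0 (fun y => (deriv (Fc t) y) ^ 2) x / 2)
    (W : ℝ → ℝ → ℂ)
    (hW : ∀ t, W t = Pp (fun x => Complex.exp (-Complex.I * Fc t x / 2)))
    (hWt : ∀ t x, deriv (fun s => W s x) t
        = Pp (fun y => deriv (fun s => Complex.exp (-Complex.I * Fc s y / 2)) t) x) :
    ∀ t x,
      deriv (fun s => W s x) t - Complex.I * deriv (deriv (W t)) x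
        = -Pp (fun y => W t y * Pm (deriv (deriv (Fc t))) y) x
          + Complex.I / 4 * P0 (fun y => (deriv (Fc t) y) ^ 2) x * W t x := by

  intro t x
  obtain ⟨c, hc⟩ := hP0const (fun y => (deriv (Fc t) y) ^ 2)
  -- smoothness of `Fc t` in `x`
  have hFt : ContDiff ℝ (⊤ : ℕ∞) (fun y : ℝ => F t y) := by
    have e : (fun y : ℝ => F t y) = Function.uncurry F ∘ fun y => (t, y) := rfl
    rw [e]
    exact hsmooth.comp (contDiff_const.prodMk contDiff_id)
  have hsm : ContDiff ℝ (⊤ : ℕ∞) (Fc t) := by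
    have e : Fc t = fun y => ((F t y : ℝ) : ℂ) := funext fun y => hFc t y
    rw [e]
    exact Complex.ofRealCLM.contDiff.comp hFt
  have hsm' : ContDiff ℝ ((⊤ : ℕ∞) : WithTop ℕ∞) (Fc t) := hsm.of_le (by simp)
  have hdf : Differentiable ℝ (Fc t) := (contDiff_infty_iff_deriv.mp hsm').1
  have hdf' : Differentiable ℝ (deriv (Fc t)) :=
    (contDiff_infty_iff_deriv.mp (contDiff_infty_iff_deriv.mp hsm').2).1
  -- spatial derivatives of u = exp(-i F/2)
  have hud : ∀ y, HasDerivAt (fun z => Complex.exp (-Complex.I * Fc t z / 2))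
      (Complex.exp (-Complex.I * Fc t y / 2) * (-Complex.I * deriv (Fc t) y / 2)) y := by
    intro y
    exact ((((hdf y).hasDerivAt).const_mul (-Complex.I)).div_const 2).cexp
  have hu1 : deriv (fun z => Complex.exp (-Complex.I * Fc t z / 2))
      = fun y => Complex.exp (-Complex.I * Fc t y / 2) * (-Complex.I * deriv (Fc t) y / 2) :=
    funext fun y => (hud y).deriv
  have hu2 : deriv (deriv (fun z => Complex.exp (-Complex.I * Fc t z / 2)))
      = fun y => Complex.exp (-Complex.I * Fc t y / 2) * (-Complex.I * deriv (Fc t) y / 2)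
            * (-Complex.I * deriv (Fc t) y / 2)
          + Complex.exp (-Complex.I * Fc t y / 2) * (-Complex.I * deriv (deriv (Fc t)) y / 2) := by
    rw [hu1]
    funext y
    exact ((hud y).mul ((((hdf' y).hasDerivAt).const_mul (-Complex.I)).div_const 2)).deriv
  -- time derivative of u
  have htd : ∀ y, deriv (fun s => Complex.exp (-Complex.I * Fc s y / 2)) t
      = Complex.exp (-Complex.I * Fc t y / 2)
          * (-Complex.I * deriv (fun s => Fc s y) t / 2) := by
    intro y
    have h1 : ContDiff ℝ (⊤ : ℕ∞) (fun s : ℝ => F s y) := by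
      have e : (fun s : ℝ => F s y) = Function.uncurry F ∘ fun s => (s, y) := rfl
      rw [e]
      exact hsmooth.comp (contDiff_id.prodMk contDiff_const)
    have h3 : Differentiable ℝ (fun s => Fc s y) := by
      have e : (fun s => Fc s y) = fun s => ((F s y : ℝ) : ℂ) := funext fun s => hFc s y
      rw [e]
      exact ((Complex.ofRealCLM.contDiff.comp h1).of_le (by exact_mod_cast (le_top : (1 : ℕ∞) ≤ ⊤))).differentiable one_ne_zero
    exact (((((h3 t).hasDerivAt).const_mul (-Complex.I)).div_const 2).cexp).deriv
  -- pointwise key identity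
  have key : ∀ y,
      deriv (fun s => Complex.exp (-Complex.I * Fc s y / 2)) t
        - Complex.I * deriv (deriv (fun z => Complex.exp (-Complex.I * Fc t z / 2))) y
      = -1 * (Complex.exp (-Complex.I * Fc t y / 2) * Pm (deriv (deriv (Fc t))) y)
        + Complex.I / 4 * c * Complex.exp (-Complex.I * Fc t y / 2) := by
    intro y
    have h1 : deriv (fun s => Fc s y) t
        = (deriv (Fc t) y) ^ 2 / 2 - c / 2 - H (deriv (deriv (Fc t))) y := by
      have h := heq t y
      simp only [hc] at h
      linear_combination h
    have h2 := congrFun (hHid (deriv (deriv (Fc t)))) y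
    have h0 : P0 (deriv (deriv (Fc t))) y = 0 := by
      simp [hFxx0 t]
    rw [htd y, congrFun hu2 y, h1]
    set U := Complex.exp (-Complex.I * Fc t y / 2) with hU
    linear_combination (U / 2) * h2 + (-U / 2) * h0
      + (U * deriv (deriv (Fc t)) y / 2
          - Complex.I * U * (deriv (Fc t) y) ^ 2 / 4) * Complex.I_sq
  -- Pp of differences
  have hsub : ∀ g h : ℝ → ℂ, Pp (fun y => g y - h y) = fun y => Pp g y - Pp h y := by
    intro g h
    have e : (fun y => g y - h y) = g + fun y => (-1 : ℂ) * h y := by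
      funext y; simp [Pi.add_apply]; ring
    rw [e, hPpadd, hPpsmul]
    funext y
    simp [Pi.add_apply]
    ring
  -- assemble
  rw [hWt t x, hW t, ← hPpderiv (fun x => Complex.exp (-Complex.I * Fc t x / 2)),
    ← hPpderiv (deriv (fun x => Complex.exp (-Complex.I * Fc t x / 2)))]
  simp only [hc]
  have L1 : Complex.I * Pp (deriv (deriv (fun z => Complex.exp (-Complex.I * Fc t z / 2)))) x
      = Pp (fun y => Complex.I
          * deriv (deriv (fun z => Complex.exp (-Complex.I * Fc t z / 2))) y) x :=
    (congrFun (hPpsmul Complex.I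
      (deriv (deriv (fun z => Complex.exp (-Complex.I * Fc t z / 2))))) x).symm
  rw [L1]
  have L2 : Pp (fun y => deriv (fun s => Complex.exp (-Complex.I * Fc s y / 2)) t) x
        - Pp (fun y => Complex.I
            * deriv (deriv (fun z => Complex.exp (-Complex.I * Fc t z / 2))) y) x
      = Pp (fun y => deriv (fun s => Complex.exp (-Complex.I * Fc s y / 2)) t
          - Complex.I * deriv (deriv (fun z => Complex.exp (-Complex.I * Fc t z / 2))) y) x :=
    (congrFun (hsub (fun y => deriv (fun s => Complex.exp (-Complex.I * Fc s y / 2)) t)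
      (fun y => Complex.I
          * deriv (deriv (fun z => Complex.exp (-Complex.I * Fc t z / 2))) y)) x).symm
  rw [L2]
  have K : Pp (fun y => deriv (fun s => Complex.exp (-Complex.I * Fc s y / 2)) t
          - Complex.I * deriv (deriv (fun z => Complex.exp (-Complex.I * Fc t z / 2))) y) x
      = Pp (fun y => -1 * (Complex.exp (-Complex.I * Fc t y / 2)
              * Pm (deriv (deriv (Fc t))) y)
          + Complex.I / 4 * c * Complex.exp (-Complex.I * Fc t y / 2)) x := by
    congr 1
    funext y
    exact key y
  rw [K]
  have D1 : Pp (fun y => -1 * (Complex.exp (-Complex.I * Fc t y / 2)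
              * Pm (deriv (deriv (Fc t))) y)
          + Complex.I / 4 * c * Complex.exp (-Complex.I * Fc t y / 2)) x
      = Pp (fun y => -1 * (Complex.exp (-Complex.I * Fc t y / 2)
              * Pm (deriv (deriv (Fc t))) y)) x
        + Pp (fun y => Complex.I / 4 * c * Complex.exp (-Complex.I * Fc t y / 2)) x :=
    congrFun (hPpadd
      (fun y => -1 * (Complex.exp (-Complex.I * Fc t y / 2) * Pm (deriv (deriv (Fc t))) y))
      (fun y => Complex.I / 4 * c * Complex.exp (-Complex.I * Fc t y / 2))) x
  have D2 : Pp (fun y => -1 * (Complex.exp (-Complex.I * Fc t y / 2)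
              * Pm (deriv (deriv (Fc t))) y)) x
      = -1 * Pp (fun y => Complex.exp (-Complex.I * Fc t y / 2)
              * Pm (deriv (deriv (Fc t))) y) x :=
    congrFun (hPpsmul (-1)
      (fun y => Complex.exp (-Complex.I * Fc t y / 2) * Pm (deriv (deriv (Fc t))) y)) x
  have D3 : Pp (fun y => Complex.I / 4 * c * Complex.exp (-Complex.I * Fc t y / 2)) x
      = Complex.I / 4 * c * Pp (fun y => Complex.exp (-Complex.I * Fc t y / 2)) x :=
    congrFun (hPpsmul (Complex.I / 4 * c)
      (fun y => Complex.exp (-Complex.I * Fc t y / 2))) x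
  rw [D1, D2, D3]
  -- split u into Pp u + (Pm u + P0 u) inside the product
  have hsplitu : Pp (fun y => Complex.exp (-Complex.I * Fc t y / 2)
        * Pm (deriv (deriv (Fc t))) y) x
      = Pp (fun y => Pp (fun z => Complex.exp (-Complex.I * Fc t z / 2)) y
          * Pm (deriv (deriv (Fc t))) y) x := by
    have e : (fun y => Complex.exp (-Complex.I * Fc t y / 2) * Pm (deriv (deriv (Fc t))) y)
        = fun y => Pp (fun z => Complex.exp (-Complex.I * Fc t z / 2)) y
              * Pm (deriv (deriv (Fc t))) y
            + (Pm (fun z => Complex.exp (-Complex.I * Fc t z / 2)) y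
                + P0 (fun z => Complex.exp (-Complex.I * Fc t z / 2)) y)
              * Pm (deriv (deriv (Fc t))) y := by
      funext y
      have h := congrFun (hsplit (fun z => Complex.exp (-Complex.I * Fc t z / 2))) y
      simp only [Pi.add_apply] at h
      linear_combination (-(Pm (deriv (deriv (Fc t))) y)) * h
    rw [e]
    have A1 : Pp (fun y => Pp (fun z => Complex.exp (-Complex.I * Fc t z / 2)) y
            * Pm (deriv (deriv (Fc t))) y
          + (Pm (fun z => Complex.exp (-Complex.I * Fc t z / 2)) y
              + P0 (fun z => Complex.exp (-Complex.I * Fc t z / 2)) y)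
            * Pm (deriv (deriv (Fc t))) y) x
        = Pp (fun y => Pp (fun z => Complex.exp (-Complex.I * Fc t z / 2)) y
              * Pm (deriv (deriv (Fc t))) y) x
          + Pp (fun y => (Pm (fun z => Complex.exp (-Complex.I * Fc t z / 2)) y
              + P0 (fun z => Complex.exp (-Complex.I * Fc t z / 2)) y)
            * Pm (deriv (deriv (Fc t))) y) x :=
      congrFun (hPpadd
        (fun y => Pp (fun z => Complex.exp (-Complex.I * Fc t z / 2)) y
            * Pm (deriv (deriv (Fc t))) y)
        (fun y => (Pm (fun z => Complex.exp (-Complex.I * Fc t z / 2)) y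
            + P0 (fun z => Complex.exp (-Complex.I * Fc t z / 2)) y)
          * Pm (deriv (deriv (Fc t))) y)) x
    have A2 : Pp (fun y => (Pm (fun z => Complex.exp (-Complex.I * Fc t z / 2)) y
            + P0 (fun z => Complex.exp (-Complex.I * Fc t z / 2)) y)
          * Pm (deriv (deriv (Fc t))) y) x = 0 :=
      congrFun (hvanish (fun z => Complex.exp (-Complex.I * Fc t z / 2))
        (deriv (deriv (Fc t)))) x
    rw [A1, A2, add_zero]
  rw [hsplitu]
  ring
end
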